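/- Let w₁ be a vertex of a digraph D lying on a cycle, and suppose w₁ has a+1 out-neighbors t₀, t₁, ..., t_a such that t_i → t_j whenever 1 ≤ i < j and t_i → t₀ for all i ≥ 1. If a(a−1)/2 ≥ t+1, then for every k ≥ 3 there exist vertices u, v and at least t+1 distinct walks of length k from u to v in D. -/

import Mathlib

/-- A walk of length `k` in the digraph with arc relation `A`,
given as its sequence of `k+1` vertices. -/
def IsWalk {V : Type*} (A : V → V → Prop) {k : ℕ} (w : Fin (k+1) → V) : Prop :=
  ∀ i : Fin k, A (w i.castSucc) (w i.succ)

/-- A walk of length `k` from `u` to `v`. -/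
def IsWalkFrom {V : Type*} (A : V → V → Prop) (k : ℕ) (u v : V) (w : Fin (k+1) → V) : Prop :=
  IsWalk A w ∧ w 0 = u ∧ w (Fin.last k) = v

/-- A (directed) cycle of length `m ≥ 1`: a closed walk whose first `m` vertices are distinct. -/
def IsCycle {V : Type*} (A : V → V → Prop) (m : ℕ) (c : Fin (m+1) → V) : Prop :=
  1 ≤ m ∧ IsWalk A c ∧ c (Fin.last m) = c 0 ∧
    Function.Injective (fun i : Fin m => c i.castSucc)

/-- There exist at least `s` pairwise distinct walks of length `k` from `u` to `v`. -/
def HasWalks {V : Type*} (A : V → V → Prop) (k s : ℕ) (u v : V) : Prop :=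
  ∃ f : Fin s → (Fin (k+1) → V), Function.Injective f ∧ ∀ i, IsWalkFrom A k u v (f i)

/-!
Going backwards around the cycle through `w₁` gives, for every `L`, a walk of length `L` ending
at `w₁`. Each pair `1 ≤ i < j ≤ a` extends it by the three arcs `w₁ → t_i → t_j → t₀` to a walk
of length `L + 3` with the same two endpoints, and distinct pairs give distinct walks, so there
are `a(a-1)/2 ≥ t+1` of them.
-/

section

variable {V : Type*} {A : V → V → Prop}

lemma isWalk_snoc {k : ℕ} {w : Fin (k+1) → V} {x : V} :
    IsWalk A (Fin.snoc w x : Fin (k+2) → V) ↔ IsWalk A w ∧ A (w (Fin.last k)) x := by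
  simp [IsWalk, Fin.forall_fin_succ', Fin.succ_castSucc, -Fin.castSucc_succ]

lemma exists_isWalk_last_eq_of_forall_in_adj {S : Set V} (hS : ∀ x ∈ S, ∃ y ∈ S, A y x) :
    ∀ (L : ℕ), ∀ x ∈ S, ∃ w : Fin (L+1) → V, IsWalk A w ∧ w (Fin.last L) = x
  | 0, x, _ => ⟨fun _ => x, fun i => i.elim0, rfl⟩
  | L+1, x, hx => by
    obtain ⟨y, hy, hyx⟩ := hS x hx
    obtain ⟨w, hw, rfl⟩ := exists_isWalk_last_eq_of_forall_in_adj hS L y hy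
    exact ⟨Fin.snoc w x, isWalk_snoc.2 ⟨hw, hyx⟩, Fin.snoc_last ..⟩

lemma IsCycle.exists_in_adj {m : ℕ} {c : Fin (m+1) → V} (hc : IsCycle A m c) :
    ∀ x ∈ Set.range c, ∃ y ∈ Set.range c, A y x := by
  obtain ⟨hm, hwalk, hclose, -⟩ := hc
  rintro _ ⟨i, rfl⟩
  obtain ⟨n, rfl⟩ : ∃ n, m = n + 1 := ⟨m - 1, by omega⟩
  cases i using Fin.cases with
  | zero => exact ⟨_, ⟨_, rfl⟩, hclose ▸ hwalk (Fin.last n)⟩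
  | succ j => exact ⟨_, ⟨_, rfl⟩, hwalk j⟩

lemma hasWalks_card {k : ℕ} {u v : V} (W : Finset (Fin (k+1) → V))
    (hW : ∀ w ∈ W, IsWalkFrom A k u v w) : HasWalks A k W.card u v :=
  ⟨fun i => W.equivFin.symm i, Subtype.val_injective.comp W.equivFin.symm.injective,
    fun i => hW _ (W.equivFin.symm i).2⟩

lemma HasWalks.mono {k s s' : ℕ} {u v : V} (h : HasWalks A k s' u v) (hs : s ≤ s') :
    HasWalks A k s u v := by
  obtain ⟨f, hf, hw⟩ := h
  exact ⟨f ∘ Fin.castLE hs, hf.comp (Fin.castLE_injective hs), fun i => hw _⟩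

end

theorem stmt_9_general {V : Type*} (A : V → V → Prop) (t a : ℕ)
    (w₁ : V) (m : ℕ) (c : Fin (m+1) → V) (hc : IsCycle A m c) (hw : ∃ i, c i = w₁)
    (f : Fin (a+1) → V) (hf : Function.Injective f)
    (hout : ∀ i, A w₁ (f i))
    (hij : ∀ i j : Fin (a+1), 1 ≤ (i : ℕ) → i < j → A (f i) (f j))
    (h0 : ∀ i : Fin (a+1), 1 ≤ (i : ℕ) → A (f i) (f 0))
    (hat : t + 1 ≤ a * (a - 1) / 2)
    (k : ℕ) (hk : 3 ≤ k) :
    ∃ u v, HasWalks A k (t+1) u v := by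
  classical
  obtain ⟨L, rfl⟩ : ∃ L, k = L + 3 := ⟨k - 3, by omega⟩
  obtain ⟨p, hp, rfl⟩ := exists_isWalk_last_eq_of_forall_in_adj hc.exists_in_adj L w₁ hw
  let walk : Fin a × Fin a → Fin (L + 3 + 1) → V := fun ij =>
    Fin.snoc (Fin.snoc (Fin.snoc p (f ij.1.succ)) (f ij.2.succ)) (f 0)
  have walk_inj : Function.Injective walk := by
    intro ij ij' h
    obtain ⟨h, -⟩ := Fin.snoc_injective2 h
    obtain ⟨h, h₂⟩ := Fin.snoc_injective2 h
    obtain ⟨-, h₁⟩ := Fin.snoc_injective2 h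
    exact Prod.ext (Fin.succ_injective _ (hf h₁)) (Fin.succ_injective _ (hf h₂))
  have walk_from (ij : Fin a × Fin a) (hlt : ij.1 < ij.2) :
      IsWalkFrom A (L+3) (p 0) (f 0) (walk ij) := by
    refine ⟨?_, by simp [walk, Fin.snoc_apply_zero], Fin.snoc_last ..⟩
    simp only [walk, isWalk_snoc, Fin.snoc_last]
    exact ⟨⟨⟨hp, hout _⟩, hij _ _ (by simp) (Fin.succ_lt_succ_iff.2 hlt)⟩, h0 _ (by simp)⟩
  have hwalks := hasWalks_card (A := A) (({ij | ij.1 < ij.2} : Finset (Fin a × Fin a)).image walk)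
    (Finset.forall_mem_image.2 fun ij hij => walk_from ij (Finset.mem_filter.1 hij).2)
  rw [Finset.card_image_of_injective _ walk_inj, Fintype.card_product_filter_lt,
    Fintype.card_fin, Nat.choose_two_right] at hwalks
  exact ⟨_, _, hwalks.mono hat⟩

/-- A vertex `w₁` on a cycle with `a+1` out-neighbours `t₀,…,t_a` satisfying
`t_i → t_j` for `1 ≤ i < j` and `t_i → t₀` for `i ≥ 1`, where `a(a-1)/2 ≥ t+1`,
forces `t+1` walks of every length `k ≥ 3` with the same endpoints. -/
theorem stmt_9 {V : Type*} (A : V → V → Prop) (t a : ℕ) (ht : 1 ≤ t) (ha : 2 ≤ a)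
    (w₁ : V) (m : ℕ) (c : Fin (m+1) → V) (hc : IsCycle A m c) (hw : ∃ i, c i = w₁)
    (f : Fin (a+1) → V) (hf : Function.Injective f)
    (hout : ∀ i, A w₁ (f i))
    (hij : ∀ i j : Fin (a+1), 1 ≤ (i : ℕ) → i < j → A (f i) (f j))
    (h0 : ∀ i : Fin (a+1), 1 ≤ (i : ℕ) → A (f i) (f 0))
    (hat : t + 1 ≤ a * (a - 1) / 2)
    (k : ℕ) (hk : 3 ≤ k) :
    ∃ u v, HasWalks A k (t+1) u v :=
  stmt_9_general A t a w₁ m c hc hw f hf hout hij h0 hat k hk
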